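/- arXiv:2404.08954 — 2 statements merged into one kernel-verified Lean document; each statement's English description precedes it below -/
import Mathlib

section
/- Let F be a field and let r(T) and s(T) be monic polynomials over F of degrees n and m respectively. Then the rank of the Sylvester matrix of r and s equals n + m minus the degree of the greatest common divisor of r and s. -/
open Polynomial Matrix

/-- The Sylvester matrix of two polynomials `r` and `s`, regarded as having degrees `n`
and `m` respectively: an `(n+m) × (n+m)` matrix whose rows are the shifted coefficient
vectors of `r` (`m` rows) and of `s` (`n` rows), as used in defining the resultant. -/
def sylvesterMatrix {F : Type*} [CommRing F] (n m : ℕ) (r s : Polynomial F) :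
    Matrix (Fin m ⊕ Fin n) (Fin (n + m)) F :=
  Matrix.of (Sum.elim
    (fun i j => if (i : ℕ) ≤ (j : ℕ) ∧ (j : ℕ) ≤ (i : ℕ) + n then r.coeff (n + i - j) else 0)
    (fun i j => if (i : ℕ) ≤ (j : ℕ) ∧ (j : ℕ) ≤ (i : ℕ) + m then s.coeff (m + i - j) else 0))

section SylvesterAux

variable {F : Type*} [Field F]

lemma mul_mem_span_shifts {r p : F[X]} {m : ℕ} (hp : p ∈ degreeLT F m) :
    p * r ∈ Submodule.span F (Set.range fun i : Fin m => (X : F[X]) ^ (i : ℕ) * r) := by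
  by_cases hp0 : p = 0
  · simp [hp0]
  have hdeg : p.natDegree < m := natDegree_lt_iff_degree_lt hp0 |>.2 (mem_degreeLT.1 hp)
  have hrep : p = ∑ i ∈ Finset.range m, monomial i (p.coeff i) := as_sum_range' p m hdeg
  rw [hrep, Finset.sum_mul]
  refine Submodule.sum_mem _ fun i hi => ?_
  have : (monomial i (p.coeff i) : F[X]) * r = p.coeff i • ((X : F[X]) ^ i * r) := by
    rw [smul_eq_C_mul, ← mul_assoc, C_mul_X_pow_eq_monomial]
  rw [this]
  exact Submodule.smul_mem _ _ (Submodule.subset_span ⟨⟨i, Finset.mem_range.1 hi⟩, rfl⟩)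

lemma span_shifts_eq [DecidableEq F[X]] (n m : ℕ) (r s : F[X]) (hr : r.Monic) (hs : s.Monic)
    (hrdeg : r.natDegree = n) (hsdeg : s.natDegree = m) :
    Submodule.span F ((Set.range fun i : Fin m => (X : F[X]) ^ (i : ℕ) * r) ∪
        (Set.range fun j : Fin n => (X : F[X]) ^ (j : ℕ) * s)) =
      Submodule.map (LinearMap.mulLeft F (EuclideanDomain.gcd r s))
        (degreeLT F (n + m - (EuclideanDomain.gcd r s).natDegree)) := by
  set g := EuclideanDomain.gcd r s with hg
  have hr0 : r ≠ 0 := hr.ne_zero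
  have hs0 : s ≠ 0 := hs.ne_zero
  have hg0 : g ≠ 0 := fun h => hr0 ((EuclideanDomain.gcd_eq_zero_iff).1 (hg ▸ h)).1
  set d := g.natDegree with hd
  obtain ⟨r', hr'⟩ : g ∣ r := EuclideanDomain.gcd_dvd_left r s
  obtain ⟨s', hs'⟩ : g ∣ s := EuclideanDomain.gcd_dvd_right r s
  have hr'0 : r' ≠ 0 := fun h => hr0 (by simp [hr', h])
  have hs'0 : s' ≠ 0 := fun h => hs0 (by simp [hs', h])
  have hr'deg : r'.natDegree = n - d := by
    have := natDegree_mul hg0 hr'0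
    rw [← hr', hrdeg] at this; omega
  have hs'deg : s'.natDegree = m - d := by
    have := natDegree_mul hg0 hs'0
    rw [← hs', hsdeg] at this; omega
  have hdn : d ≤ n := by
    have := natDegree_mul hg0 hr'0; rw [← hr', hrdeg] at this; omega
  have hdm : d ≤ m := by
    have := natDegree_mul hg0 hs'0; rw [← hs', hsdeg] at this; omega
  apply le_antisymm
  · rw [Submodule.span_le]
    rintro x (⟨i, rfl⟩ | ⟨j, rfl⟩)
    · refine ⟨X ^ (i : ℕ) * r', ?_, by rw [LinearMap.mulLeft_apply]; ring_nf; rw [hr']; ring⟩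
      rw [SetLike.mem_coe, mem_degreeLT]
      calc degree ((X : F[X]) ^ (i : ℕ) * r') ≤ (i : ℕ) + r'.degree := by
            rw [degree_mul, degree_X_pow]
        _ < (↑(n + m - d) : WithBot ℕ) := by
            rw [degree_eq_natDegree hr'0, hr'deg, ← Nat.cast_add, Nat.cast_lt]
            omega
    · refine ⟨X ^ (j : ℕ) * s', ?_, by rw [LinearMap.mulLeft_apply]; ring_nf; rw [hs']; ring⟩
      rw [SetLike.mem_coe, mem_degreeLT]
      calc degree ((X : F[X]) ^ (j : ℕ) * s') ≤ (j : ℕ) + s'.degree := by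
            rw [degree_mul, degree_X_pow]
        _ < (↑(n + m - d) : WithBot ℕ) := by
            rw [degree_eq_natDegree hs'0, hs'deg, ← Nat.cast_add, Nat.cast_lt]
            omega
  · rintro x ⟨p, hp, rfl⟩
    rw [LinearMap.mulLeft_apply]
    -- g * p = a * r + b * s with deg a < m, deg b < n
    have hbezout : g = r * EuclideanDomain.gcdA r s + s * EuclideanDomain.gcdB r s :=
      EuclideanDomain.gcd_eq_gcd_ab r s
    set A := EuclideanDomain.gcdA r s
    set B := EuclideanDomain.gcdB r s
    set a := (p * A) % s' with ha
    set t := (p * A) / s' with ht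
    have hdiv : s' * t + a = p * A := EuclideanDomain.div_add_mod (p * A) s'
    have hadeg : a.degree < s'.degree := EuclideanDomain.mod_lt _ hs'0
    set b := t * r' + p * B with hb
    have hkey : g * p = a * r + b * s := by
      have h1 : g * p = p * A * r + p * B * s := by
        rw [hbezout]; ring
      rw [← hdiv] at h1
      have h2 : s' * r = r' * s := by
        rw [hr', hs']; ring
      calc g * p = (s' * t + a) * r + p * B * s := h1
        _ = a * r + t * (s' * r) + p * B * s := by ring
        _ = a * r + t * (r' * s) + p * B * s := by rw [h2]
        _ = a * r + b * s := by rw [hb]; ring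
    rw [hkey]
    have hamem : a ∈ degreeLT F m := by
      rw [mem_degreeLT]
      calc a.degree < s'.degree := hadeg
        _ ≤ (m : WithBot ℕ) := by
            rw [degree_eq_natDegree hs'0, hs'deg, Nat.cast_le]; omega
    have hbmem : b ∈ degreeLT F n := by
      rw [mem_degreeLT]
      by_cases hb0 : b = 0
      · rw [hb0, degree_zero]; exact WithBot.bot_lt_coe _
      have hbs : (b * s).degree < ((n + m : ℕ) : WithBot ℕ) := by
        have h1 : (g * p).degree < ((n + m : ℕ) : WithBot ℕ) := by
          rcases eq_or_ne p 0 with rfl | hp0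
          · rw [mul_zero, degree_zero]; exact WithBot.bot_lt_coe _
          rw [degree_mul, degree_eq_natDegree hg0, degree_eq_natDegree hp0,
            ← Nat.cast_add, Nat.cast_lt]
          have := natDegree_lt_iff_degree_lt hp0 |>.2 (mem_degreeLT.1 hp)
          omega
        have h2 : (a * r).degree < ((n + m : ℕ) : WithBot ℕ) := by
          by_cases ha0 : a = 0
          · rw [ha0, zero_mul, degree_zero]; exact WithBot.bot_lt_coe _
          rw [degree_mul, degree_eq_natDegree ha0, degree_eq_natDegree hr0,
            ← Nat.cast_add, Nat.cast_lt, hrdeg]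
          have : a.natDegree < s'.natDegree :=
            natDegree_lt_natDegree ha0 hadeg
          omega
        have : b * s = g * p - a * r := by rw [hkey]; ring
        rw [this]
        exact lt_of_le_of_lt (degree_sub_le _ _) (max_lt h1 h2)
      rw [degree_mul, degree_eq_natDegree hb0, degree_eq_natDegree hs0, hsdeg,
        ← Nat.cast_add, Nat.cast_lt] at hbs
      rw [degree_eq_natDegree hb0, Nat.cast_lt]
      omega
    exact Submodule.add_mem _
      (Submodule.span_mono Set.subset_union_left (mul_mem_span_shifts hamem))
      (Submodule.span_mono Set.subset_union_right (mul_mem_span_shifts hbmem))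

noncomputable def revLin (F : Type*) [Field F] (N : ℕ) : (Fin N → F) →ₗ[F] F[X] :=
  Fintype.linearCombination F fun j : Fin N => (X : F[X]) ^ (N - 1 - (j : ℕ))

lemma revLin_coeff {N : ℕ} (v : Fin N → F) (j : Fin N) :
    (revLin F N v).coeff (N - 1 - (j : ℕ)) = v j := by
  rw [revLin, Fintype.linearCombination_apply, finset_sum_coeff]
  rw [Finset.sum_eq_single j]
  · rw [coeff_smul, coeff_X_pow, if_pos rfl, smul_eq_mul, mul_one]
  · intro k _ hk
    rw [coeff_smul, coeff_X_pow, if_neg, smul_zero]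
    have hk' : (k : ℕ) ≠ (j : ℕ) := fun h => hk (Fin.ext h)
    have := k.isLt; have := j.isLt
    omega
  · intro h; exact absurd (Finset.mem_univ j) h

lemma revLin_injective {N : ℕ} : Function.Injective (revLin F N) := by
  intro v w h
  funext j
  rw [← revLin_coeff v j, ← revLin_coeff w j, h]

lemma revLin_row {N a i : ℕ} {p : F[X]} (hdeg : p.natDegree ≤ a) (hi : i + a < N) :
    revLin F N (fun j : Fin N =>
        if i ≤ (j : ℕ) ∧ (j : ℕ) ≤ i + a then p.coeff (a + i - j) else 0) =
      (X : F[X]) ^ (N - 1 - i - a) * p := by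
  rw [revLin, Fintype.linearCombination_apply]
  ext k
  rw [finset_sum_coeff, mul_comm, coeff_mul_X_pow']
  simp only [coeff_smul, coeff_X_pow, smul_eq_mul]
  by_cases hk : k < N
  · rw [Finset.sum_eq_single (⟨N - 1 - k, by omega⟩ : Fin N)]
    · show (if i ≤ N - 1 - k ∧ N - 1 - k ≤ i + a then p.coeff (a + i - (N - 1 - k)) else 0) *
        (if k = N - 1 - (N - 1 - k) then (1 : F) else 0) = _
      rw [if_pos (show k = N - 1 - (N - 1 - k) by omega), mul_one]
      by_cases h2 : N - 1 - i - a ≤ k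
      · rw [if_pos h2]
        by_cases h1 : i ≤ N - 1 - k ∧ N - 1 - k ≤ i + a
        · rw [if_pos h1]; congr 1; omega
        · rw [not_and_or, not_le, not_le] at h1
          rw [if_neg (by rw [not_and_or, not_le, not_le]; exact h1)]
          symm
          apply coeff_eq_zero_of_natDegree_lt
          omega
      · rw [if_neg h2, if_neg]
        omega
    · intro b _ hb
      have hb' : ¬ k = N - 1 - (b : ℕ) := by
        have : (b : ℕ) ≠ N - 1 - k := fun h => hb (Fin.ext h)
        have := b.isLt
        omega
      rw [if_neg hb', mul_zero]
    · intro h; exact absurd (Finset.mem_univ _) h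
  · rw [Finset.sum_eq_zero (fun b _ => by
        rw [if_neg (show ¬ k = N - 1 - (b : ℕ) by have := b.isLt; omega), mul_zero]),
      if_pos (show N - 1 - i - a ≤ k by omega)]
    symm
    apply coeff_eq_zero_of_natDegree_lt
    omega


end SylvesterAux

/-- Over a field `F`, if `r` and `s` are monic of degrees `n` and `m`,
then the rank of their Sylvester matrix equals `n + m - deg gcd(r, s)`. -/
theorem rank_sylvesterMatrix {F : Type*} [Field F] (n m : ℕ) (r s : Polynomial F)
    (hr : r.Monic) (hs : s.Monic) (hrdeg : r.natDegree = n) (hsdeg : s.natDegree = m) :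
    letI : DecidableEq (Polynomial F) := Classical.decEq _
    (sylvesterMatrix n m r s).rank = n + m - (EuclideanDomain.gcd r s).natDegree := by
  letI : DecidableEq (Polynomial F) := Classical.decEq _
  set g := EuclideanDomain.gcd r s with hg
  have hg0 : g ≠ 0 := fun h => hr.ne_zero (EuclideanDomain.gcd_eq_zero_iff.1 (hg ▸ h)).1
  set d := g.natDegree with hd
  set M := sylvesterMatrix n m r s with hM
  rw [Matrix.rank_eq_finrank_span_row]
  have key := span_shifts_eq n m r s hr hs hrdeg hsdeg
  have himg : (revLin F (n + m)) '' Set.range M =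
      (Set.range fun i : Fin m => (X : F[X]) ^ (i : ℕ) * r) ∪
        (Set.range fun j : Fin n => (X : F[X]) ^ (j : ℕ) * s) := by
    have h1 : Set.range M =
        Set.range (fun i : Fin m => M (Sum.inl i)) ∪
          Set.range (fun j : Fin n => M (Sum.inr j)) := by
      ext v
      constructor
      · rintro ⟨x, rfl⟩
        cases x with
        | inl i => exact Or.inl ⟨i, rfl⟩
        | inr j => exact Or.inr ⟨j, rfl⟩
      · rintro (⟨i, rfl⟩ | ⟨j, rfl⟩)
        exacts [⟨Sum.inl i, rfl⟩, ⟨Sum.inr j, rfl⟩]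
    rw [h1, Set.image_union, ← Set.range_comp, ← Set.range_comp]
    congr 1
    · ext q
      simp only [Set.mem_range, Function.comp]
      constructor
      · rintro ⟨i, rfl⟩
        have hrow : revLin F (n + m) (M (Sum.inl i)) =
            (X : F[X]) ^ (n + m - 1 - (i : ℕ) - n) * r :=
          revLin_row hrdeg.le (by have := i.isLt; omega)
        rw [hrow]
        exact ⟨⟨n + m - 1 - (i : ℕ) - n, by have := i.isLt; omega⟩, rfl⟩
      · rintro ⟨i, rfl⟩
        have := i.isLt
        refine ⟨⟨m - 1 - (i : ℕ), by omega⟩, ?_⟩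
        have hrow : revLin F (n + m) (M (Sum.inl ⟨m - 1 - (i : ℕ), by omega⟩)) =
            (X : F[X]) ^ (n + m - 1 - (m - 1 - (i : ℕ)) - n) * r :=
          revLin_row hrdeg.le (by omega)
        rw [hrow, show n + m - 1 - (m - 1 - (i : ℕ)) - n = (i : ℕ) by omega]
    · ext q
      simp only [Set.mem_range, Function.comp]
      constructor
      · rintro ⟨j, rfl⟩
        have hrow : revLin F (n + m) (M (Sum.inr j)) =
            (X : F[X]) ^ (n + m - 1 - (j : ℕ) - m) * s :=
          revLin_row hsdeg.le (by have := j.isLt; omega)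
        rw [hrow]
        exact ⟨⟨n + m - 1 - (j : ℕ) - m, by have := j.isLt; omega⟩, rfl⟩
      · rintro ⟨j, rfl⟩
        have := j.isLt
        refine ⟨⟨n - 1 - (j : ℕ), by omega⟩, ?_⟩
        have hrow : revLin F (n + m) (M (Sum.inr ⟨n - 1 - (j : ℕ), by omega⟩)) =
            (X : F[X]) ^ (n + m - 1 - (n - 1 - (j : ℕ)) - m) * s :=
          revLin_row hsdeg.le (by omega)
        rw [hrow, show n + m - 1 - (n - 1 - (j : ℕ)) - m = (j : ℕ) by omega]
  have hmulinj : Function.Injective (LinearMap.mulLeft F g) := fun x y h =>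
    mul_left_cancel₀ hg0 (by simpa using h)
  calc Module.finrank F ↥(Submodule.span F (Set.range M))
      = Module.finrank F
          ↥(Submodule.map (revLin F (n + m)) (Submodule.span F (Set.range M))) :=
        (Submodule.equivMapOfInjective _ revLin_injective _).finrank_eq
    _ = Module.finrank F
          ↥(Submodule.map (LinearMap.mulLeft F g) (degreeLT F (n + m - d))) := by
        rw [Submodule.map_span, himg, key]
    _ = Module.finrank F ↥(degreeLT F (n + m - d)) :=
        ((Submodule.equivMapOfInjective _ hmulinj _).finrank_eq).symm
    _ = n + m - d := by
        rw [(degreeLTEquiv F _).finrank_eq, Module.finrank_fin_fun]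
end

section
/- Let F be an algebraically closed field and G ⊆ GL_n(F) a closed subgroup acting irreducibly on F^n such that G/Z(G) is connected. If the center Z(G) is finite, then the identity component G° is semisimple. -/
open Matrix

noncomputable section

variable {F : Type*} [Field F] {n : ℕ}

/-- Zariski-closed subsets of the space of `n × n` matrices: common zero loci of
families of polynomials in the matrix entries. -/
def MatZClosed (S : Set (Matrix (Fin n) (Fin n) F)) : Prop :=
  ∃ I : Set (MvPolynomial (Fin n × Fin n) F),
    S = {A | ∀ p ∈ I, MvPolynomial.eval (fun q => A q.1 q.2) p = 0}

/-- Zariski-closed subsets of `GL_n(F)`: traces on `GL_n` of Zariski-closed sets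
of matrices. -/
def GLZClosed (S : Set (GL (Fin n) F)) : Prop :=
  ∃ C : Set (Matrix (Fin n) (Fin n) F), MatZClosed C ∧
    S = {g : GL (Fin n) F | (g : Matrix (Fin n) (Fin n) F) ∈ C}

/-- A subset of `GL_n(F)` is connected for the Zariski topology:
it cannot be split by two relatively closed sets. -/
def GLZConnected (S : Set (GL (Fin n) F)) : Prop :=
  S.Nonempty ∧ ∀ U V : Set (GL (Fin n) F), GLZClosed U → GLZClosed V →
    S ⊆ U ∪ V → (S ∩ U).Nonempty → (S ∩ V).Nonempty → (S ∩ (U ∩ V)).Nonempty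

/-- Zariski closure of a subset of `GL_n(F)`. -/
def glZClosure (S : Set (GL (Fin n) F)) : Set (GL (Fin n) F) :=
  ⋂₀ {C : Set (GL (Fin n) F) | GLZClosed C ∧ S ⊆ C}

/-- The scalar matrix `c • 1` as an element of `GL_n(F)`. -/
def scalarGL (n : ℕ) (c : Fˣ) : GL (Fin n) F :=
  Units.map (Matrix.scalar (Fin n)).toMonoidHom c

/-- The group `𝔾_m` of scalar matrices inside `GL_n(F)`. -/
def IsScalarGL (g : GL (Fin n) F) : Prop := ∃ c : Fˣ, g = scalarGL n c

/-- The tautological action of a subgroup `G ⊆ GL_n(F)` on `F^n` is irreducible. -/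
def IrredOn (G : Subgroup (GL (Fin n) F)) : Prop :=
  0 < n ∧ ∀ W : Submodule F (Fin n → F),
    (∀ g ∈ G, ∀ v ∈ W, Matrix.mulVec (g : Matrix (Fin n) (Fin n) F) v ∈ W) → W = ⊥ ∨ W = ⊤

/-- The center of a subset of `GL_n(F)`. -/
def centerSet (S : Set (GL (Fin n) F)) : Set (GL (Fin n) F) :=
  {z ∈ S | ∀ g ∈ S, z * g = g * z}

/-- The saturation of a subset of `GL_n(F)` by the scalar matrices `𝔾_m`.  For a
subgroup `G` whose tautological representation is irreducible (so that
`Z(G) = G ∩ 𝔾_m`), connectedness of this set is equivalent to connectedness of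
`G/Z(G)` (the image of `G` in `PGL_n`), since the fibres `g·𝔾_m` are connected. -/
def scalarSaturation (S : Set (GL (Fin n) F)) : Set (GL (Fin n) F) :=
  {x | ∃ g ∈ S, ∃ c : Fˣ, x = scalarGL n c * g}

/-- The identity component of a subgroup `G ⊆ GL_n(F)` for the Zariski topology:
the union of all Zariski-connected subsets of `G` containing `1`. -/
def identityComponent (G : Subgroup (GL (Fin n) F)) : Set (GL (Fin n) F) :=
  ⋃₀ {S : Set (GL (Fin n) F) | S ⊆ G ∧ GLZConnected S ∧ (1 : GL (Fin n) F) ∈ S}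

/-- The identity component of `G`, as a subgroup (the subgroup it generates). -/
def idCompSubgroup (G : Subgroup (GL (Fin n) F)) : Subgroup (GL (Fin n) F) :=
  Subgroup.closure (identityComponent G)

/-- The derived group `G^der` of the identity component of `G`. -/
def derSubgroup (G : Subgroup (GL (Fin n) F)) : Subgroup (GL (Fin n) F) :=
  ⁅idCompSubgroup G, idCompSubgroup G⁆

/-- A subset of `GL_n(F)` is (linearly) reductive: its tautological representation on
`F^n` is completely reducible. -/
def LinearlyReductiveOn (S : Set (GL (Fin n) F)) : Prop :=
  ∀ W : Submodule F (Fin n → F),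
    (∀ g ∈ S, ∀ v ∈ W, Matrix.mulVec (g : Matrix (Fin n) (Fin n) F) v ∈ W) →
    ∃ W' : Submodule F (Fin n → F),
      (∀ g ∈ S, ∀ v ∈ W', Matrix.mulVec (g : Matrix (Fin n) (Fin n) F) v ∈ W') ∧ IsCompl W W'

/-- A subset of `GL_n(F)` is semisimple: reductive with finite center. -/
def IsSemisimpleOn (S : Set (GL (Fin n) F)) : Prop :=
  LinearlyReductiveOn S ∧ (centerSet S).Finite

end

noncomputable section Aux

namespace GLZAux

open MvPolynomial

variable {F : Type*} [Field F] {n : ℕ}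

lemma matZ_iInter {ι : Sort*} (C : ι → Set (Matrix (Fin n) (Fin n) F))
    (h : ∀ i, MatZClosed (C i)) : MatZClosed (⋂ i, C i) := by
  choose I hI using h
  refine ⟨⋃ i, I i, ?_⟩
  ext A
  simp only [Set.mem_iInter, Set.mem_setOf_eq, Set.mem_iUnion]
  constructor
  · rintro hA p ⟨i, hp⟩
    have := hI i ▸ hA i
    exact this p hp
  · intro hA i
    rw [hI i]
    exact fun p hp => hA p ⟨i, hp⟩

lemma matZ_union {C D : Set (Matrix (Fin n) (Fin n) F)} (hC : MatZClosed C)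
    (hD : MatZClosed D) : MatZClosed (C ∪ D) := by
  obtain ⟨I, rfl⟩ := hC
  obtain ⟨J, rfl⟩ := hD
  refine ⟨{r | ∃ p ∈ I, ∃ q ∈ J, r = p * q}, ?_⟩
  ext A
  simp only [Set.mem_union, Set.mem_setOf_eq]
  constructor
  · rintro (h | h) r ⟨p, hp, q, hq, rfl⟩
    · rw [_root_.map_mul, h p hp, zero_mul]
    · rw [_root_.map_mul, h q hq, mul_zero]
  · intro h
    by_cases hI : ∀ p ∈ I, MvPolynomial.eval (fun q => A q.1 q.2) p = 0
    · exact Or.inl hI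
    · push_neg at hI
      obtain ⟨p, hp, hp0⟩ := hI
      refine Or.inr fun q hq => ?_
      have := h (p * q) ⟨p, hp, q, hq, rfl⟩
      rw [_root_.map_mul] at this
      exact (mul_eq_zero.mp this).resolve_left hp0

lemma matZ_empty : MatZClosed (∅ : Set (Matrix (Fin n) (Fin n) F)) := by
  refine ⟨{1}, ?_⟩
  ext A
  simp [eq_comm]

lemma glZ_empty : GLZClosed (∅ : Set (GL (Fin n) F)) :=
  ⟨∅, matZ_empty, by ext g; simp⟩

lemma glZ_sInter {A : Set (Set (GL (Fin n) F))} (h : ∀ s ∈ A, GLZClosed s) :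
    GLZClosed (⋂₀ A) := by
  choose C hC hC' using h
  refine ⟨⋂ s : A, C s.1 s.2, matZ_iInter _ fun s => hC s.1 s.2, ?_⟩
  ext g
  simp only [Set.mem_sInter, Set.mem_setOf_eq, Set.mem_iInter]
  constructor
  · rintro hg ⟨s, hs⟩
    have := hg s hs
    rw [hC' s hs] at this
    exact this
  · intro hg s hs
    rw [hC' s hs]
    exact hg ⟨s, hs⟩

lemma glZ_union {U V : Set (GL (Fin n) F)} (hU : GLZClosed U) (hV : GLZClosed V) :
    GLZClosed (U ∪ V) := by
  obtain ⟨C, hC, rfl⟩ := hU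
  obtain ⟨D, hD, rfl⟩ := hV
  exact ⟨C ∪ D, matZ_union hC hD, by ext g; simp⟩

instance glTop : TopologicalSpace (GL (Fin n) F) :=
  TopologicalSpace.ofClosed {S | GLZClosed S} glZ_empty
    (fun A hA => glZ_sInter fun s hs => hA hs)
    (fun A hA B hB => glZ_union hA hB)

lemma isClosed_iff {S : Set (GL (Fin n) F)} : IsClosed S ↔ GLZClosed S := by
  rw [← isOpen_compl_iff]
  change Sᶜᶜ ∈ {S | GLZClosed S} ↔ _
  rw [compl_compl]
  rfl

lemma glZConnected_iff {S : Set (GL (Fin n) F)} :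
    GLZConnected S ↔ S.Nonempty ∧ IsPreconnected S := by
  rw [isPreconnected_closed_iff, GLZConnected]
  refine and_congr_right fun _ => ⟨fun h U V hU hV => h U V (isClosed_iff.mp hU) (isClosed_iff.mp hV),
    fun h U V hU hV => h U V (isClosed_iff.mpr hU) (isClosed_iff.mpr hV)⟩


lemma eval_bind₁' (f : (Fin n × Fin n) → F) (g : (Fin n × Fin n) → MvPolynomial (Fin n × Fin n) F)
    (p : MvPolynomial (Fin n × Fin n) F) :
    MvPolynomial.eval f (MvPolynomial.bind₁ g p) =
      MvPolynomial.eval (fun i => MvPolynomial.eval f (g i)) p := by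
  simpa using aeval_bind₁ (S := F) f g p

lemma eval_subst (M A : Matrix (Fin n) (Fin n) F) (p : MvPolynomial (Fin n × Fin n) F) :
    MvPolynomial.eval (fun q => A q.1 q.2)
      (MvPolynomial.bind₁ (fun q : Fin n × Fin n =>
        ∑ k : Fin n, MvPolynomial.C (M q.1 k) * MvPolynomial.X (k, q.2)) p) =
    MvPolynomial.eval (fun q => (M * A) q.1 q.2) p := by
  rw [eval_bind₁']
  have : (fun i : Fin n × Fin n => MvPolynomial.eval (fun q => A q.1 q.2)
      (∑ k : Fin n, MvPolynomial.C (M i.1 k) * MvPolynomial.X (k, i.2))) =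
      fun q : Fin n × Fin n => (M * A) q.1 q.2 := by
    funext q
    simp [Matrix.mul_apply]
  rw [this]

lemma matZ_mulLeft (M : Matrix (Fin n) (Fin n) F) {C : Set (Matrix (Fin n) (Fin n) F)}
    (hC : MatZClosed C) : MatZClosed {A | M * A ∈ C} := by
  obtain ⟨I, rfl⟩ := hC
  refine ⟨(MvPolynomial.bind₁ (fun q : Fin n × Fin n =>
      ∑ k : Fin n, MvPolynomial.C (M q.1 k) * MvPolynomial.X (k, q.2))) '' I, ?_⟩
  ext A
  simp only [Set.mem_setOf_eq, Set.forall_mem_image]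
  constructor
  · intro h p hp
    rw [eval_subst]
    exact h p hp
  · intro h p hp
    have := h hp
    rwa [eval_subst] at this

lemma continuous_mulLeft (a : GL (Fin n) F) :
    Continuous (fun x : GL (Fin n) F => a * x) := by
  rw [continuous_iff_isClosed]
  intro s hs
  obtain ⟨C, hC, rfl⟩ := isClosed_iff.mp hs
  rw [isClosed_iff]
  refine ⟨{A | (a : Matrix (Fin n) (Fin n) F) * A ∈ C}, matZ_mulLeft _ hC, ?_⟩
  ext x
  simp [Set.mem_setOf_eq]

/-- The vanishing ideal of a set of invertible matrices. -/
def vanIdeal (S : Set (GL (Fin n) F)) : Ideal (MvPolynomial (Fin n × Fin n) F) where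
  carrier := {p | ∀ g ∈ S, MvPolynomial.eval
    (fun q => (g : Matrix (Fin n) (Fin n) F) q.1 q.2) p = 0}
  zero_mem' := fun g _ => by simp
  add_mem' := fun {p} {q} hp hq g hg => by
    simp only [Set.mem_setOf_eq] at *
    rw [_root_.map_add, hp g hg, hq g hg, add_zero]
  smul_mem' := fun c p hp g hg => by
    simp only [Set.mem_setOf_eq, smul_eq_mul] at *
    rw [_root_.map_mul, hp g hg, mul_zero]

lemma eq_of_vanIdeal {S T : Set (GL (Fin n) F)} (hS : GLZClosed S) (hT : GLZClosed T)
    (h : vanIdeal S = vanIdeal T) : S = T := by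
  have key : ∀ R : Set (GL (Fin n) F), GLZClosed R →
      R = {g : GL (Fin n) F | ∀ p ∈ vanIdeal R, MvPolynomial.eval
        (fun q => (g : Matrix (Fin n) (Fin n) F) q.1 q.2) p = 0} := by
    rintro R ⟨C, ⟨I, rfl⟩, rfl⟩
    ext g
    constructor
    · exact fun hg p hp => hp g hg
    · intro hg
      exact fun p hp => hg p (fun g' hg' => hg' p hp)
  rw [key S hS, key T hT, h]

lemma vanIdeal_antitone {S T : Set (GL (Fin n) F)} (h : S ⊆ T) : vanIdeal T ≤ vanIdeal S :=
  fun p hp g hg => hp g (h hg)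

instance : TopologicalSpace.NoetherianSpace (GL (Fin n) F) := by
  refine ((TopologicalSpace.noetherianSpace_TFAE (GL (Fin n) F)).out 0 1).mpr ?_
  constructor
  have wf : WellFounded ((· > ·) : Ideal (MvPolynomial (Fin n × Fin n) F) →
      Ideal (MvPolynomial (Fin n × Fin n) F) → Prop) :=
    (inferInstance : IsNoetherianRing (MvPolynomial (Fin n × Fin n) F)).wf
  have := InvImage.wf (fun C : TopologicalSpace.Closeds (GL (Fin n) F) => vanIdeal (C : Set _)) wf
  refine Subrelation.wf ?_ this
  rintro C D hCD
  have hsub : vanIdeal (D : Set (GL (Fin n) F)) ≤ vanIdeal (C : Set (GL (Fin n) F)) :=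
    vanIdeal_antitone hCD.le
  refine lt_of_le_of_ne hsub ?_
  intro he
  exact hCD.ne (TopologicalSpace.Closeds.ext (eq_of_vanIdeal (isClosed_iff.mp C.isClosed)
    (isClosed_iff.mp D.isClosed) he.symm))

variable {G : Subgroup (GL (Fin n) F)}

lemma scalarGL_coe (c : Fˣ) :
    ((scalarGL n c : GL (Fin n) F) : Matrix (Fin n) (Fin n) F) = Matrix.scalar (Fin n) (c : F) :=
  rfl

lemma scalarGL_one : (scalarGL n (1 : Fˣ) : GL (Fin n) F) = 1 := by
  apply Units.ext
  rw [scalarGL_coe, Units.val_one, Units.val_one]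
  exact _root_.map_one _

lemma scalarGL_mul (c c' : Fˣ) :
    (scalarGL n (c * c') : GL (Fin n) F) = scalarGL n c * scalarGL n c' := by
  unfold scalarGL
  exact _root_.map_mul _ c c'

lemma scalarGL_comm (c : Fˣ) (x : GL (Fin n) F) : scalarGL n c * x = x * scalarGL n c := by
  apply Units.ext
  rw [Units.val_mul, Units.val_mul, scalarGL_coe]
  exact (Matrix.scalar_commute (c : F) (fun r => Commute.all _ r) _).eq

lemma scalarGL_mulVec (c : Fˣ) (v : Fin n → F) :
    Matrix.mulVec ((scalarGL n c : GL (Fin n) F) : Matrix (Fin n) (Fin n) F) v = (c : F) • v := by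
  funext i
  rw [scalarGL_coe, Matrix.scalar_apply, Matrix.mulVec_diagonal]
  simp

lemma mem_scalarSaturation {g : GL (Fin n) F} (hg : g ∈ G) :
    g ∈ scalarSaturation (G : Set (GL (Fin n) F)) :=
  ⟨g, hg, 1, by rw [scalarGL_one, one_mul]⟩

lemma identityComponent_subset {x : GL (Fin n) F} (hx : x ∈ identityComponent G) :
    x ∈ G := by
  obtain ⟨S, ⟨hSG, -, -⟩, hxS⟩ := hx
  exact hSG hxS

lemma connectedComponentIn_subset_identityComponent :
    connectedComponentIn (G : Set (GL (Fin n) F)) 1 ⊆ identityComponent G := by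
  intro x hx
  refine ⟨connectedComponentIn (G : Set (GL (Fin n) F)) 1,
    ⟨connectedComponentIn_subset _ _, ?_, mem_connectedComponentIn G.one_mem⟩, hx⟩
  exact glZConnected_iff.mpr ⟨⟨1, mem_connectedComponentIn G.one_mem⟩,
    isPreconnected_connectedComponentIn⟩

lemma exists_finite_cover (hclosed : GLZClosed (G : Set (GL (Fin n) F))) :
    ∃ R : Set (GL (Fin n) F), R.Finite ∧ R ⊆ (G : Set (GL (Fin n) F)) ∧
      ∀ x ∈ (G : Set (GL (Fin n) F)), ∃ g ∈ R,
        g⁻¹ * x ∈ connectedComponentIn (G : Set (GL (Fin n) F)) 1 := by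
  obtain ⟨S, hSfin, hScl, hSirr, hSU⟩ :=
    TopologicalSpace.NoetherianSpace.exists_finite_set_isClosed_irreducible
      (isClosed_iff.mpr hclosed)
  have hne : ∀ t ∈ S, ∃ x : GL (Fin n) F, x ∈ t := fun t ht => (hSirr t ht).nonempty
  choose pt hpt using hne
  refine ⟨{y | ∃ t, ∃ ht : t ∈ S, pt t ht = y}, hSfin.dependent_image pt, ?_, ?_⟩
  · rintro y ⟨t, ht, rfl⟩
    have : t ⊆ (G : Set (GL (Fin n) F)) := hSU ▸ fun z hz => Set.mem_sUnion.mpr ⟨t, ht, hz⟩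
    exact this (hpt t ht)
  · intro x hx
    have hx' : x ∈ ⋃₀ S := hSU ▸ hx
    obtain ⟨t, ht, hxt⟩ := hx'
    have htG : t ⊆ (G : Set (GL (Fin n) F)) := hSU ▸ fun z hz => Set.mem_sUnion.mpr ⟨t, ht, hz⟩
    refine ⟨pt t ht, ⟨t, ht, rfl⟩, ?_⟩
    have himg : (fun y => (pt t ht)⁻¹ * y) '' t ⊆ connectedComponentIn (G : Set (GL (Fin n) F)) 1 := by
      refine IsPreconnected.subset_connectedComponentIn ?_ ?_ ?_
      · exact (hSirr t ht).2.isPreconnected.image _ (continuous_mulLeft (pt t ht)⁻¹).continuousOn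
      · exact ⟨pt t ht, hpt t ht, inv_mul_cancel (pt t ht)⟩
      · rintro y ⟨z, hz, rfl⟩
        exact mul_mem (inv_mem (htG (hpt t ht))) (htG hz)
    exact himg ⟨x, hxt, rfl⟩

lemma stabilizer_closed (W : Submodule F (Fin n → F)) :
    GLZClosed {x : GL (Fin n) F |
      ∀ v ∈ W, Matrix.mulVec (x : Matrix (Fin n) (Fin n) F) v ∈ W} := by
  classical
  obtain ⟨W', hcompl⟩ := Submodule.exists_isCompl W
  set φ : (Fin n → F) →ₗ[F] (Fin n → F) :=
    W'.subtype ∘ₗ (Submodule.linearProjOfIsCompl W' W hcompl.symm) with hφdef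
  have hφ : ∀ v, φ v = 0 ↔ v ∈ W := by
    intro v
    rw [hφdef]
    simp only [LinearMap.comp_apply, Submodule.coe_subtype]
    rw [ZeroMemClass.coe_eq_zero]
    exact Submodule.linearProjOfIsCompl_apply_eq_zero_iff hcompl.symm
  set M := LinearMap.toMatrix' φ with hMdef
  have hM : ∀ v, Matrix.mulVec M v = φ v := fun v => by
    rw [hMdef, ← Matrix.toLin'_apply, Matrix.toLin'_toMatrix']
  obtain ⟨s, hs⟩ := (IsNoetherian.noetherian W : W.FG)
  have key : ∀ (A : Matrix (Fin n) (Fin n) F) (w : Fin n → F) (j : Fin n),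
      MvPolynomial.eval (fun q => A q.1 q.2)
        (∑ a : Fin n, ∑ b : Fin n, MvPolynomial.C (M j a * w b) * MvPolynomial.X (a, b)) =
      Matrix.mulVec M (Matrix.mulVec A w) j := by
    intro A w j
    simp only [map_sum, _root_.map_mul, MvPolynomial.eval_C, MvPolynomial.eval_X]
    unfold Matrix.mulVec dotProduct
    refine Finset.sum_congr rfl fun a _ => ?_
    rw [Finset.mul_sum]
    exact Finset.sum_congr rfl fun b _ => by ring
  refine ⟨{A | ∀ w ∈ (s : Set (Fin n → F)), ∀ j, Matrix.mulVec M (Matrix.mulVec A w) j = 0},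
    ⟨{p | ∃ w ∈ (s : Set (Fin n → F)), ∃ j : Fin n,
      p = ∑ a : Fin n, ∑ b : Fin n, MvPolynomial.C (M j a * w b) * MvPolynomial.X (a, b)}, ?_⟩,
    ?_⟩
  · ext A
    simp only [Set.mem_setOf_eq]
    constructor
    · rintro h p ⟨w, hw, j, rfl⟩
      rw [key]
      exact h w hw j
    · intro h w hw j
      rw [← key]
      exact h _ ⟨w, hw, j, rfl⟩
  · ext x
    simp only [Set.mem_setOf_eq]
    constructor
    · intro h w hw j
      have hwW : w ∈ W := hs ▸ Submodule.subset_span hw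
      have := (hφ _).mpr (h w hwW)
      rw [← hM] at this
      exact congrFun this j
    · intro h v hv
      have hv' : v ∈ Submodule.span F (s : Set (Fin n → F)) := hs.symm ▸ hv
      refine Submodule.span_induction (p := fun v _ =>
        Matrix.mulVec (x : Matrix (Fin n) (Fin n) F) v ∈ W) ?_ ?_ ?_ ?_ hv'
      · intro w hw
        rw [← hφ, ← hM]
        funext j
        exact h w hw j
      · show Matrix.mulVec (x : Matrix (Fin n) (Fin n) F) 0 ∈ W
        rw [Matrix.mulVec_zero]
        exact W.zero_mem
      · intro a b _ _ ha hb
        show Matrix.mulVec (x : Matrix (Fin n) (Fin n) F) (a + b) ∈ W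
        rw [Matrix.mulVec_add]
        exact W.add_mem ha hb
      · intro c a _ ha
        show Matrix.mulVec (x : Matrix (Fin n) (Fin n) F) (c • a) ∈ W
        rw [Matrix.mulVec_smul]
        exact W.smul_mem c ha

lemma invariant_extend (G : Subgroup (GL (Fin n) F))
    (hclosed : GLZClosed (G : Set (GL (Fin n) F)))
    (hconn : GLZConnected (scalarSaturation (G : Set (GL (Fin n) F))))
    (W : Submodule F (Fin n → F))
    (hW : ∀ g ∈ identityComponent G, ∀ v ∈ W,
      Matrix.mulVec (g : Matrix (Fin n) (Fin n) F) v ∈ W) :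
    ∀ g ∈ G, ∀ v ∈ W, Matrix.mulVec (g : Matrix (Fin n) (Fin n) F) v ∈ W := by
  classical
  set U : Set (GL (Fin n) F) :=
    {x | ∀ v ∈ W, Matrix.mulVec (x : Matrix (Fin n) (Fin n) F) v ∈ W} with hUdef
  have hUz : GLZClosed U := stabilizer_closed W
  have hUone : (1 : GL (Fin n) F) ∈ U := by
    intro v hv
    rw [Units.val_one, Matrix.one_mulVec]
    exact hv
  have hUmul : ∀ x ∈ U, ∀ y ∈ U, x * y ∈ U := by
    intro x hx y hy v hv
    rw [Units.val_mul, ← Matrix.mulVec_mulVec]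
    exact hx _ (hy v hv)
  have hcancel : ∀ (x : GL (Fin n) F) (v : Fin n → F),
      Matrix.mulVec ((x⁻¹ : GL (Fin n) F) : Matrix (Fin n) (Fin n) F)
        (Matrix.mulVec (x : Matrix (Fin n) (Fin n) F) v) = v := by
    intro x v
    rw [Matrix.mulVec_mulVec, ← Units.val_mul, inv_mul_cancel x, Units.val_one,
      Matrix.one_mulVec]
  have hUinv : ∀ x ∈ U, x⁻¹ ∈ U := by
    intro x hx
    set f : W →ₗ[F] W :=
      (Matrix.mulVecLin (x : Matrix (Fin n) (Fin n) F)).restrict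
        (fun v hv => by rw [Matrix.mulVecLin_apply]; exact hx v hv) with hfdef
    have hfapp : ∀ w : W, (f w : Fin n → F) =
        Matrix.mulVec (x : Matrix (Fin n) (Fin n) F) w := by
      intro w
      rfl
    have hinj : Function.Injective f := by
      intro a b hab
      apply Subtype.ext
      have h1 : Matrix.mulVec (x : Matrix (Fin n) (Fin n) F) a
          = Matrix.mulVec (x : Matrix (Fin n) (Fin n) F) b := by
        rw [← hfapp, ← hfapp, hab]
      have := congrArg (Matrix.mulVec ((x⁻¹ : GL (Fin n) F) : Matrix (Fin n) (Fin n) F)) h1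
      rwa [hcancel, hcancel] at this
    have hsurj := LinearMap.injective_iff_surjective.mp hinj
    intro v hv
    obtain ⟨w, hw⟩ := hsurj ⟨v, hv⟩
    have hxw : Matrix.mulVec (x : Matrix (Fin n) (Fin n) F) w = v := by
      rw [← hfapp, hw]
    have : Matrix.mulVec ((x⁻¹ : GL (Fin n) F) : Matrix (Fin n) (Fin n) F) v = (w : Fin n → F) := by
      rw [← hxw, hcancel]
    rw [this]
    exact w.2
  have hscal : ∀ c : Fˣ, scalarGL n c ∈ U := by
    intro c v hv
    rw [scalarGL_mulVec]
    exact W.smul_mem _ hv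
  have hKU : connectedComponentIn (G : Set (GL (Fin n) F)) 1 ⊆ U := fun k hk =>
    hW k (connectedComponentIn_subset_identityComponent hk)
  obtain ⟨R, hRfin, hRG, hRcov⟩ := exists_finite_cover (G := G) hclosed
  set S := scalarSaturation (G : Set (GL (Fin n) F)) with hSdef
  have hSone : (1 : GL (Fin n) F) ∈ S := mem_scalarSaturation G.one_mem
  have hcov : ∀ x ∈ S, ∃ g ∈ R, g⁻¹ * x ∈ S ∩ U := by
    rintro x ⟨g₀, hg₀, c, rfl⟩
    obtain ⟨g, hgR, hgK⟩ := hRcov g₀ hg₀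
    have hrw : g⁻¹ * (scalarGL n c * g₀) = scalarGL n c * (g⁻¹ * g₀) := by
      rw [← mul_assoc, ← scalarGL_comm, mul_assoc]
    refine ⟨g, hgR, ?_, ?_⟩
    · exact ⟨g⁻¹ * g₀, mul_mem (inv_mem (hRG hgR)) hg₀, c, hrw⟩
    · show g⁻¹ * (scalarGL n c * g₀) ∈ U
      rw [hrw]
      exact hUmul _ (hscal c) _ (hKU hgK)
  set R' := {g ∈ R | ∀ y ∈ S ∩ U, g * y ∉ U} with hR'def
  set B := ⋃ g ∈ R', {x : GL (Fin n) F | g⁻¹ * x ∈ U} with hBdef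
  have hBz : GLZClosed B := by
    rw [← isClosed_iff]
    refine Set.Finite.isClosed_biUnion (hRfin.subset fun g hg => hg.1) ?_
    intro g _
    have : {x : GL (Fin n) F | g⁻¹ * x ∈ U} = (fun x => g⁻¹ * x) ⁻¹' U := rfl
    rw [this]
    exact (isClosed_iff.mpr hUz).preimage (continuous_mulLeft g⁻¹)
  have hcover : S ⊆ U ∪ B := by
    intro x hx
    obtain ⟨g, hgR, hgx⟩ := hcov x hx
    by_cases hbad : ∀ y ∈ S ∩ U, g * y ∉ U
    · refine Or.inr (Set.mem_biUnion ⟨hgR, hbad⟩ hgx.2)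
    · push_neg at hbad
      obtain ⟨y, hy, hgy⟩ := hbad
      have hgU : g ∈ U := by
        have := hUmul _ hgy _ (hUinv y hy.2)
        rwa [mul_assoc, mul_inv_cancel y, mul_one] at this
      have : x = g * (g⁻¹ * x) := by rw [← mul_assoc, mul_inv_cancel g, one_mul]
      exact Or.inl (this ▸ hUmul _ hgU _ hgx.2)
  have hdisj : ¬ (S ∩ (U ∩ B)).Nonempty := by
    rintro ⟨x, hxS, hxU, hxB⟩
    obtain ⟨g, hgR', hgx⟩ := Set.mem_iUnion₂.mp hxB
    have hgU : g ∈ U := by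
      have := hUmul _ hxU _ (hUinv _ hgx)
      have h2 : x * (g⁻¹ * x)⁻¹ = g := by group
      rwa [h2] at this
    exact hgR'.2 1 ⟨hSone, hUone⟩ (by rwa [mul_one])
  have hSU : S ⊆ U := by
    intro x hx
    by_contra hxU
    have hxB : x ∈ B := (hcover hx).resolve_left hxU
    exact hdisj (hconn.2 U B hUz hBz hcover ⟨1, hSone, hUone⟩ ⟨x, hx, hxB⟩)
  intro g hg
  exact hSU (mem_scalarSaturation hg)

end GLZAux

end Aux

open Matrix in
/-- Let `F` be algebraically closed and `G ⊆ GL_n(F)` a closed subgroup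
acting irreducibly on `F^n` such that `G/Z(G)` is connected (encoded: the scalar
saturation `G·𝔾_m` is Zariski-connected).  If the center `Z(G)` is finite, then the
identity component `G°` is semisimple (reductive with finite center). -/
theorem identityComponent_semisimple_of_finite_center {F : Type*} [Field F] [IsAlgClosed F]
    {n : ℕ} (G : Subgroup (GL (Fin n) F))
    (hclosed : GLZClosed (G : Set (GL (Fin n) F)))
    (hirr : IrredOn G)
    (hconn : GLZConnected (scalarSaturation (G : Set (GL (Fin n) F))))
    (hZfin : (centerSet (G : Set (GL (Fin n) F))).Finite) :
    IsSemisimpleOn (identityComponent G) := by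
  classical
  obtain ⟨hn, hirr2⟩ := hirr
  have star : ∀ W : Submodule F (Fin n → F),
      (∀ g ∈ identityComponent G, ∀ v ∈ W,
        Matrix.mulVec (g : Matrix (Fin n) (Fin n) F) v ∈ W) → W = ⊥ ∨ W = ⊤ := fun W hW =>
    hirr2 W (GLZAux.invariant_extend G hclosed hconn W hW)
  constructor
  · intro W hW
    rcases star W hW with rfl | rfl
    · exact ⟨⊤, fun g _ v _ => Submodule.mem_top, isCompl_bot_top⟩
    · refine ⟨⊥, fun g _ v hv => ?_, isCompl_top_bot⟩
      rw [Submodule.mem_bot] at hv ⊢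
      rw [hv, Matrix.mulVec_zero]
  · apply hZfin.subset
    rintro z ⟨hzIC, hzcomm⟩
    haveI : Nonempty (Fin n) := ⟨⟨0, hn⟩⟩
    set f : Module.End F (Fin n → F) :=
      Matrix.mulVecLin ((z : GL (Fin n) F) : Matrix (Fin n) (Fin n) F) with hfdef
    obtain ⟨c, hc⟩ := Module.End.exists_eigenvalue f
    set E := Module.End.eigenspace f c with hEdef
    have hEinv : ∀ g ∈ identityComponent G, ∀ v ∈ E,
        Matrix.mulVec (g : Matrix (Fin n) (Fin n) F) v ∈ E := by
      intro g hgIC v hv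
      rw [hEdef, Module.End.mem_eigenspace_iff] at hv ⊢
      rw [hfdef, Matrix.mulVecLin_apply] at hv ⊢
      have hcom : (z * g : GL (Fin n) F) = g * z := hzcomm g hgIC
      calc Matrix.mulVec (z : Matrix (Fin n) (Fin n) F)
            (Matrix.mulVec (g : Matrix (Fin n) (Fin n) F) v)
          = Matrix.mulVec (((z * g : GL (Fin n) F)) : Matrix (Fin n) (Fin n) F) v := by
            rw [Units.val_mul, Matrix.mulVec_mulVec]
        _ = Matrix.mulVec (((g * z : GL (Fin n) F)) : Matrix (Fin n) (Fin n) F) v := by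
            rw [hcom]
        _ = Matrix.mulVec (g : Matrix (Fin n) (Fin n) F)
              (Matrix.mulVec (z : Matrix (Fin n) (Fin n) F) v) := by
            rw [Units.val_mul, Matrix.mulVec_mulVec]
        _ = Matrix.mulVec (g : Matrix (Fin n) (Fin n) F) (c • v) := by rw [hv]
        _ = c • Matrix.mulVec (g : Matrix (Fin n) (Fin n) F) v := by
            rw [Matrix.mulVec_smul]
    have hE : E = ⊤ := (star E hEinv).resolve_left hc
    have hz : ∀ v, Matrix.mulVec (z : Matrix (Fin n) (Fin n) F) v = c • v := by
      intro v
      have hv : v ∈ E := hE ▸ Submodule.mem_top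
      rw [hEdef, Module.End.mem_eigenspace_iff, hfdef, Matrix.mulVecLin_apply] at hv
      exact hv
    have hzmat : (z : Matrix (Fin n) (Fin n) F) = Matrix.scalar (Fin n) c := by
      ext i j
      have := congrFun (hz (Pi.single j 1)) i
      rw [Matrix.mulVec_single] at this
      rw [Matrix.scalar_apply, Matrix.diagonal_apply]
      simp only [Pi.smul_apply, smul_eq_mul] at this
      rcases eq_or_ne i j with rfl | hij
      · rw [if_pos rfl]
        simpa using this
      · rw [if_neg hij]
        simpa [Pi.single_eq_of_ne hij] using this
    refine ⟨GLZAux.identityComponent_subset hzIC, ?_⟩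
    intro g _
    apply Units.ext
    rw [Units.val_mul, Units.val_mul, hzmat]
    exact (Matrix.scalar_commute c (fun r => Commute.all _ r) _).eq
end
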